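/- Let (V,σ) be a pair consisting of a finite-dimensional K-vector space V and an additive map σ : V → V satisfying σ(x·v) = x^q·σ(v) for all x ∈ K, v ∈ V, and such that the K-span of σ(V) equals V. Extend σ to V ⊗_K K^s by σ(v⊗x) = σ(v)⊗x^q. Then V ⊗_K K^s admits a K^s-basis consisting of σ-invariant vectors; equivalently, the set of σ-invariant elements (V ⊗_K K^s)^σ is a k-vector space of dimension dim_K V whose K^s-span is all of V ⊗_K K^s. -/

import Mathlib

/-!
Write `q = p ^ n`. The extension of `σ` to `Ks ⊗[K] V` is `q`-semilinear and its image still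
spans, so it suffices that over a separably closed field `L` the fixed vectors of a
`q`-semilinear `σ` with spanning image span the (finite-dimensional) space `W`; such a `σ` is
injective.

A nonzero fixed vector exists: for `w ≠ 0` the iterates `w, σ w, …, σ^(m-1) w` are independent
and `σ^m w = ∑ Aᵢ σ^i w`. A vector `∑ eᵢ₊₁ σ^i w` is fixed when `e₀ = 0`,
`eᵢ₊₁ = eᵢ ^ q + Aᵢ c` and `c = eₘ ^ q`; the last condition is `P(c) = 0` for a polynomial `P`
with derivative `-1`, so `P` is separable of degree at least `q` and has a nonzero root.

If the span `U` of the fixed vectors were proper, the map induced on `W ⧸ U` would have a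
nonzero fixed class `[w]`. Then `σ w - w ∈ U`, and solving the Artin–Schreier equations
`c ^ q - c = a` coefficientwise yields `t ∈ U` with `σ t - t = σ w - w`; so `w - t` is fixed
and `w ∈ U`.
-/

open TensorProduct

/-- The `τ`-semilinear extension of `σ` to `K^s ⊗_K V`, sending `x ⊗ v` to
`x ^ q ⊗ σ v` (with `q = p ^ n`). -/
noncomputable def sigmaTensorExt (p n : ℕ) [Fact p.Prime]
    (K : Type) [Field K] [CharP K p]
    (Ks : Type) [Field Ks] [Algebra K Ks] [CharP Ks p]
    (V : Type) [AddCommGroup V] [Module K V]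
    (σV : V →+ V) (hσ : ∀ (x : K) (v : V), σV (x • v) = x ^ p ^ n • σV v) :
    Ks ⊗[K] V →+ Ks ⊗[K] V :=
  TensorProduct.liftAddHom
    { toFun := fun x =>
        { toFun := fun v => (x ^ p ^ n) ⊗ₜ[K] σV v
          map_zero' := by simp
          map_add' := fun v w => by simp [TensorProduct.tmul_add] }
      map_zero' := by
        ext v
        simp [zero_pow (pow_ne_zero n (Fact.out (p := p.Prime)).ne_zero)]
      map_add' := fun x y => by
        ext v
        simp [add_pow_char_pow, TensorProduct.add_tmul] }
    (fun c x v => by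
      simp only [AddMonoidHom.coe_mk, ZeroHom.coe_mk, smul_pow, hσ c v]
      rw [TensorProduct.smul_tmul])

open Polynomial

theorem IsSepClosed.exists_isRoot_ne {k : Type*} [Field k] [IsSepClosed k] {f : k[X]}
    (hsep : f.Separable) (hdeg : 1 < f.natDegree) (a : k) : ∃ x, f.IsRoot x ∧ x ≠ a := by
  classical
  have hcard : 1 < f.roots.toFinset.card := by
    rwa [Multiset.toFinset_card_of_nodup (nodup_roots hsep),
      ← (IsSepClosed.splits_of_separable f hsep).natDegree_eq_card_roots]
  obtain ⟨x, hx, hxa⟩ := Finset.exists_mem_ne hcard a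
  exact ⟨x, (mem_roots hsep.ne_zero).1 (Multiset.mem_toFinset.1 hx), hxa⟩

theorem IsSepClosed.exists_pow_char_pow_sub_eq {k : Type*} [Field k] [IsSepClosed k] (p : ℕ)
    [Fact p.Prime] [CharP k p] {n : ℕ} (hn : n ≠ 0) (a : k) : ∃ c : k, c ^ p ^ n - c = a := by
  obtain ⟨c, hc⟩ := exists_root_C_mul_X_pow_add_C_mul_X_add_C' p (p ^ n) 1 (-1) (-a)
    (dvd_pow_self p hn) (Nat.one_lt_pow hn (Fact.out : p.Prime).one_lt) (by simp)
  exact ⟨c, by linear_combination hc⟩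

/-- The coefficients `eᵢ` of a candidate fixed vector (see the header), as polynomials in the
unknown `c`. -/
noncomputable def fixedCoeffPoly {k : Type*} [CommRing k] (q : ℕ) (A : ℕ → k) : ℕ → k[X]
  | 0 => 0
  | i + 1 => fixedCoeffPoly q A i ^ q + C (A i) * X

section fixedCoeffPoly

variable {k : Type*} [CommRing k] {q : ℕ} {A : ℕ → k}

theorem X_dvd_fixedCoeffPoly (hq : q ≠ 0) (i : ℕ) : X ∣ fixedCoeffPoly q A i := by
  induction i with
  | zero => exact dvd_zero X
  | succ i ih => exact dvd_add (dvd_pow ih hq) (dvd_mul_left X _)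

theorem eval_fixedCoeffPoly_succ (c : k) (i : ℕ) :
    (fixedCoeffPoly q A (i + 1)).eval c = (fixedCoeffPoly q A i).eval c ^ q + A i * c := by
  simp [fixedCoeffPoly]

theorem fixedCoeffPoly_ne_zero [IsDomain k] (hq : 1 < q) {i j : ℕ} (hji : j < i)
    (hA : A j ≠ 0) : fixedCoeffPoly q A i ≠ 0 := by
  induction i with
  | zero => omega
  | succ i ih =>
    intro h
    obtain ⟨G, hG⟩ := X_dvd_fixedCoeffPoly (q := q) (A := A) (by omega) i
    -- `X ^ q` divides the first summand, so the coefficient of `X` is `A i`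
    have hAi : A i = 0 := by
      simpa [fixedCoeffPoly, hG, mul_pow, coeff_X_pow_mul', not_le.2 hq] using
        congrArg (coeff · 1) h
    have hFi : fixedCoeffPoly q A i = 0 :=
      pow_eq_zero_iff (n := q) (by omega) |>.1 (by simpa [fixedCoeffPoly, hAi] using h)
    rcases Nat.lt_succ_iff_lt_or_eq.1 hji with hji | rfl
    · exact ih hji hFi
    · exact hA hAi

end fixedCoeffPoly

theorem exists_ne_zero_eval_fixedCoeffPoly_pow_eq {L : Type*} [Field L] [IsSepClosed L]
    (p : ℕ) [Fact p.Prime] [CharP L p] {n : ℕ} (hn : n ≠ 0) {A : ℕ → L} {j m : ℕ}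
    (hjm : j < m) (hA : A j ≠ 0) :
    ∃ c ≠ 0, (fixedCoeffPoly (p ^ n) A m).eval c ^ p ^ n = c := by
  set F := fixedCoeffPoly (p ^ n) A m
  have hq : 1 < p ^ n := Nat.one_lt_pow hn (Fact.out : p.Prime).one_lt
  have hdegF : 1 ≤ F.natDegree := by
    simpa using natDegree_le_of_dvd (X_dvd_fixedCoeffPoly (by omega) m)
      (fixedCoeffPoly_ne_zero hq hjm hA)
  have hdeg : 1 < (F ^ p ^ n - X).natDegree := by
    rw [natDegree_sub_eq_left_of_natDegree_lt] <;> rw [natDegree_pow]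
    · nlinarith
    · rw [natDegree_X]; nlinarith
  have hder : derivative (F ^ p ^ n - X) = -1 := by
    simp [derivative_pow, CharP.cast_eq_zero, hn]
  have hsep : (F ^ p ^ n - X).Separable :=
    (separable_def _).2 (hder ▸ isCoprime_one_right.neg_right)
  obtain ⟨c, hc, hc0⟩ := IsSepClosed.exists_isRoot_ne hsep hdeg 0
  exact ⟨c, hc0, by simpa [sub_eq_zero] using hc⟩

section Semilinear

variable {L W : Type*} [Field L] [AddCommGroup W] [Module L W]

theorem LinearMap.injective_of_span_range_eq_top [FiniteDimensional L W] {τ : L →+* L}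
    (σ : W →ₛₗ[τ] W) (hσ : Submodule.span L (Set.range σ) = ⊤) : Function.Injective σ := by
  let e := Module.finBasis L W
  have hspan : ⊤ ≤ Submodule.span L (Set.range (σ ∘ e)) := by
    rw [← hσ, Set.range_comp, Submodule.span_le]
    rintro _ ⟨w, rfl⟩
    exact Submodule.image_span_subset_span σ _ ⟨w, by simp [e.span_eq], rfl⟩
  have hli := linearIndependent_of_top_le_span_of_card_eq_finrank hspan (by simp)
  refine (injective_iff_map_eq_zero σ).2 fun w hw => e.forall_coord_eq_zero_iff.1 fun i => ?_
  rw [← e.sum_repr w, map_sum] at hw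
  simp only [LinearMap.map_smulₛₗ] at hw
  simpa using Fintype.linearIndependent_iff.1 hli (fun i => τ (e.repr w i)) hw i

theorem exists_linearIndependent_eq_sum_range [FiniteDimensional L W] (u : ℕ → W) :
    ∃ (m : ℕ) (A : ℕ → L), LinearIndependent L (fun i : Fin m => u i) ∧
      u m = ∑ i ∈ Finset.range m, A i • u i := by
  classical
  have hex : ∃ m, ¬ LinearIndependent L (fun i : Fin (m + 1) => u i) :=
    ⟨Module.finrank L W, fun h => by simpa using h.fintype_card_le_finrank⟩
  have hmin := fun k (hk : k < Nat.find hex) => Nat.find_min hex hk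
  have hdep := Nat.find_spec hex
  generalize Nat.find hex = m at hmin hdep
  have hli : LinearIndependent L (fun i : Fin m => u i) := by
    rcases m with _ | k
    · exact linearIndependent_empty_type
    · simpa using hmin k (Nat.lt_succ_self k)
  have hmem : u m ∈ Submodule.span L (Set.range fun i : Fin m => u i) := by
    rw [linearIndependent_finSucc', not_and_not_right] at hdep
    exact hdep hli
  obtain ⟨a, ha⟩ := (Submodule.mem_span_range_iff_exists_fun L).1 hmem
  refine ⟨m, fun i => if h : i < m then a ⟨i, h⟩ else 0, hli, ?_⟩
  rw [← ha, ← Fin.sum_univ_eq_sum_range (fun i => (if h : i < m then a ⟨i, h⟩ else 0) • u i)]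
  simp

theorem exists_basis_fin_forall_mem_of_span_eq_top [FiniteDimensional L W] {s : Set W}
    (hs : Submodule.span L s = ⊤) :
    ∃ (m : ℕ) (b : Module.Basis (Fin m) L W), ∀ i, b i ∈ s := by
  let b := Module.Basis.ofSpan hs.ge
  have := FiniteDimensional.fintypeBasisIndex b
  exact ⟨_, b.reindex (Fintype.equivFin _), fun i =>
    Module.Basis.ofSpan_subset hs.ge ⟨_, (b.reindex_apply _ i).symm⟩⟩

end Semilinear

section Frobenius

open Finset

variable {L W : Type*} [Field L] [AddCommGroup W] [Module L W] {p n : ℕ} [Fact p.Prime] [CharP L p]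

theorem isFixedPt_sum_eval_fixedCoeffPoly_smul_iterate (σ : W →ₛₗ[iterateFrobenius L p n] W)
    {w : W} {m : ℕ} {A : ℕ → L} (hrel : σ^[m] w = ∑ i ∈ range m, A i • σ^[i] w) {c : L}
    (hc : (fixedCoeffPoly (p ^ n) A m).eval c ^ p ^ n = c) :
    Function.IsFixedPt σ (∑ i ∈ range m, (fixedCoeffPoly (p ^ n) A (i + 1)).eval c • σ^[i] w) := by
  set e := fun i => (fixedCoeffPoly (p ^ n) A i).eval c
  have he0 : e 0 = 0 := by simp [e, fixedCoeffPoly]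
  show σ (∑ i ∈ range m, e (i + 1) • σ^[i] w) = ∑ i ∈ range m, e (i + 1) • σ^[i] w
  calc σ (∑ i ∈ range m, e (i + 1) • σ^[i] w)
      = ∑ i ∈ range (m + 1), e i ^ p ^ n • σ^[i] w := by
        simp [sum_range_succ' _ m, he0, Function.iterate_succ_apply', iterateFrobenius_def,
          (Fact.out : p.Prime).ne_zero]
    _ = ∑ i ∈ range m, (e i ^ p ^ n + A i * c) • σ^[i] w := by
        rw [sum_range_succ, hc, hrel, smul_sum, ← sum_add_distrib]
        simp only [add_smul, mul_smul, smul_comm c]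
    _ = ∑ i ∈ range m, e (i + 1) • σ^[i] w := by
        simp only [e, eval_fixedCoeffPoly_succ]

theorem exists_ne_zero_isFixedPt [IsSepClosed L] [FiniteDimensional L W] [Nontrivial W]
    (hn : n ≠ 0) (σ : W →ₛₗ[iterateFrobenius L p n] W) (hσ : Function.Injective σ) :
    ∃ v ≠ 0, Function.IsFixedPt σ v := by
  obtain ⟨w, hw⟩ := exists_ne (0 : W)
  obtain ⟨m, A, hli, hrel⟩ := exists_linearIndependent_eq_sum_range (L := L) (σ^[·] w)
  obtain ⟨j, hjm, hAj⟩ : ∃ j < m, A j ≠ 0 := by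
    by_contra! hA
    refine hw (hσ.iterate m ?_)
    rw [hrel, Function.iterate_fixed (map_zero σ)]
    exact sum_eq_zero fun i hi => by simp [hA i (mem_range.1 hi)]
  obtain ⟨c, hc0, hc⟩ := exists_ne_zero_eval_fixedCoeffPoly_pow_eq p hn hjm hAj
  refine ⟨_, fun h => hc0 ?_, isFixedPt_sum_eval_fixedCoeffPoly_smul_iterate σ hrel hc⟩
  rw [← Fin.sum_univ_eq_sum_range (fun i => (fixedCoeffPoly (p ^ n) A (i + 1)).eval c • σ^[i] w)]
    at h
  -- the coefficient of `σ^(m-1) w` is `eₘ`, and `eₘ ^ q = c`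
  have hcoeff := Fintype.linearIndependent_iff.1 hli _ h ⟨m - 1, by omega⟩
  rw [← hc, ← Nat.sub_add_cancel (show 1 ≤ m by omega), hcoeff,
    zero_pow (pow_ne_zero n (Fact.out : p.Prime).ne_zero)]

end Frobenius

section SpanFixedPoints

open Submodule Function

variable {L W : Type*} [Field L] [AddCommGroup W] [Module L W] {p n : ℕ} [Fact p.Prime] [CharP L p]
  [IsSepClosed L]

theorem exists_sub_eq_of_mem_span_fixedPoints (hn : n ≠ 0)
    (σ : W →ₛₗ[iterateFrobenius L p n] W) {d : W} (hd : d ∈ span L (fixedPoints σ)) :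
    ∃ t ∈ span L (fixedPoints σ), σ t - t = d := by
  suffices ∀ a : L, ∃ t ∈ span L (fixedPoints σ), σ t - t = a • d by simpa using this 1
  induction hd using span_induction with
  | mem x hx =>
    intro a
    obtain ⟨c, hc⟩ := IsSepClosed.exists_pow_char_pow_sub_eq p hn a
    refine ⟨c • x, smul_mem _ _ (subset_span hx), ?_⟩
    rw [LinearMap.map_smulₛₗ, hx.eq, iterateFrobenius_def, ← sub_smul, hc]
  | zero => exact fun a => ⟨0, zero_mem _, by simp⟩
  | add x y _ _ hx hy =>
    intro a
    obtain ⟨t, ht, htx⟩ := hx a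
    obtain ⟨s, hs, hsy⟩ := hy a
    exact ⟨t + s, add_mem ht hs, by rw [map_add, smul_add, ← htx, ← hsy]; abel⟩
  | smul b x _ hx => exact fun a => by simpa [smul_smul] using hx (a * b)

theorem span_fixedPoints_eq_top [FiniteDimensional L W] (hn : n ≠ 0)
    (σ : W →ₛₗ[iterateFrobenius L p n] W) (hσ : span L (Set.range σ) = ⊤) :
    span L (fixedPoints σ) = ⊤ := by
  set U := span L (fixedPoints σ)
  by_contra hU
  have : Nontrivial (W ⧸ U) := Quotient.nontrivial_iff.2 hU
  have hUσ : U ≤ U.comap σ := span_le.2 fun x hx => by simpa [hx.eq] using subset_span hx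
  set σU := U.mapQ U σ hUσ
  have hσU : span L (Set.range σU) = ⊤ := by
    rw [eq_top_iff, ← U.range_mkQ, LinearMap.range_eq_map, ← hσ, map_span]
    exact span_mono (by rintro _ ⟨_, ⟨w, rfl⟩, rfl⟩; exact ⟨U.mkQ w, rfl⟩)
  obtain ⟨z, hz0, hz⟩ := exists_ne_zero_isFixedPt hn σU (σU.injective_of_span_range_eq_top hσU)
  obtain ⟨w, rfl⟩ := U.mkQ_surjective z
  obtain ⟨t, ht, hσt⟩ :=
    exists_sub_eq_of_mem_span_fixedPoints hn σ ((Submodule.Quotient.eq U).1 hz)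
  have hwt : w - t ∈ U :=
    subset_span (show σ (w - t) = w - t by rw [map_sub, sub_eq_sub_iff_sub_eq_sub, hσt])
  exact hz0 ((Submodule.Quotient.mk_eq_zero U).2 (by simpa using add_mem hwt ht))

end SpanFixedPoints

section sigmaTensorExt

variable {p n : ℕ} [Fact p.Prime] {K : Type} [Field K] [CharP K p] {Ks : Type} [Field Ks]
  [Algebra K Ks] [CharP Ks p] {V : Type} [AddCommGroup V] [Module K V] {σV : V →+ V}
  (hσ : ∀ (x : K) (v : V), σV (x • v) = x ^ p ^ n • σV v)

theorem sigmaTensorExt_tmul (y : Ks) (v : V) :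
    sigmaTensorExt p n K Ks V σV hσ (y ⊗ₜ[K] v) = (y ^ p ^ n) ⊗ₜ[K] σV v :=
  rfl

theorem sigmaTensorExt_smul (x : Ks) (w : Ks ⊗[K] V) :
    sigmaTensorExt p n K Ks V σV hσ (x • w) = x ^ p ^ n • sigmaTensorExt p n K Ks V σV hσ w := by
  induction w using TensorProduct.induction_on with
  | zero => simp
  | tmul y v => simp only [smul_tmul', smul_eq_mul, sigmaTensorExt_tmul, mul_pow]
  | add w₁ w₂ h₁ h₂ => rw [smul_add, map_add, h₁, h₂, map_add, smul_add]

noncomputable def sigmaTensorExtₛₗ : Ks ⊗[K] V →ₛₗ[iterateFrobenius Ks p n] Ks ⊗[K] V where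
  toFun := sigmaTensorExt p n K Ks V σV hσ
  map_add' := map_add _
  map_smul' := sigmaTensorExt_smul hσ

theorem span_range_sigmaTensorExtₛₗ (hspan : Submodule.span K (Set.range σV) = ⊤) :
    Submodule.span Ks (Set.range (sigmaTensorExtₛₗ (Ks := Ks) hσ)) = ⊤ := by
  rw [eq_top_iff, ← Submodule.baseChange_top, ← hspan, Submodule.baseChange_span]
  refine Submodule.span_mono ?_
  rintro _ ⟨_, ⟨v, rfl⟩, rfl⟩
  exact ⟨1 ⊗ₜ v, (sigmaTensorExt_tmul hσ 1 v).trans (by rw [one_pow, mk_apply])⟩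

end sigmaTensorExt

theorem stmt_14
    (p n : ℕ) [Fact p.Prime] (hn : 0 < n)
    (K : Type) [Field K] [CharP K p]
    (Ks : Type) [Field Ks] [Algebra K Ks] [CharP Ks p] [IsSepClosure K Ks]
    (V : Type) [AddCommGroup V] [Module K V] [FiniteDimensional K V]
    (σV : V →+ V)
    (hσ : ∀ (x : K) (v : V), σV (x • v) = x ^ p ^ n • σV v)
    (hspan : Submodule.span K (Set.range σV) = ⊤) :
    ∃ (m : ℕ) (b : Module.Basis (Fin m) Ks (Ks ⊗[K] V)),
      ∀ i, sigmaTensorExt p n K Ks V σV hσ (b i) = b i := by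
  have : IsSepClosed Ks := IsSepClosure.sep_closed K
  exact exists_basis_fin_forall_mem_of_span_eq_top
    (span_fixedPoints_eq_top hn.ne' (sigmaTensorExtₛₗ (Ks := Ks) hσ)
      (span_range_sigmaTensorExtₛₗ hσ hspan))
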